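/- For non-negative integers a, b, c, the q-identity ∑_{k=0}^{a} ((1−q^{2k})·q^{2k²−k−1}/(1−q^a))·qbinom(a+b,a+k)·qbinom(b+c,b+k)·qbinom(c+a,c+k) = qbinom(a+b,a)·∑_{j=0}^{c−1} q^j·qbinom(a+j,a)·qbinom(b+j,b−1) holds (as rational functions in q), assuming a ≥ 1. -/

import Mathlib

open Finset Polynomial

/-- Gaussian binomial coefficient as a polynomial in `q`, via the q-Pascal rule. -/
noncomputable def qb : ℕ → ℕ → Polynomial ℚ
  | _, 0 => 1
  | 0, _ + 1 => 0
  | n + 1, k + 1 => qb n k + Polynomial.X ^ (k + 1) * qb n (k + 1)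

/-- Gaussian binomial with integer arguments, as a rational function in `q`,
zero outside `0 ≤ k ≤ n`. -/
noncomputable def qbinom (n k : ℤ) : RatFunc ℚ :=
  if 0 ≤ k ∧ k ≤ n then algebraMap (Polynomial ℚ) (RatFunc ℚ) (qb n.toNat k.toNat) else 0

/-!
Let `F c k` be the `k`-th summand on the left and
`G c k = q^(2k²-2k+c) (1 - q^(a+k)) / (1 - q^a) [a+b, a+k] [b+c, b+k-1] [c+a, c+k]`.
Then `(F, G)` is a WZ pair: `F (c+1) k - F c k = G c k - G c (k+1)`. Summing over `k`
telescopes, since `G c (a+1) = 0`, to `G c 0`, which is `[a+b, a]` times the `c`-th term of the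
right-hand side; induction on `c` finishes. After the q-Pascal rule removes the coefficients
with `c + 1`, the WZ relation is a combination of three instances of the absorption identity
`(1 - q^k) [n, k] = (1 - q^(n-k+1)) [n, k-1]`.
-/

lemma qb_zero_right (n : ℕ) : qb n 0 = 1 := by cases n <;> rfl

lemma qb_succ_succ (n k : ℕ) : qb (n + 1) (k + 1) = qb n k + X ^ (k + 1) * qb n (k + 1) := rfl

lemma qb_eq_zero_of_lt : ∀ {n k : ℕ}, n < k → qb n k = 0
  | 0, _ + 1, _ => rfl
  | n + 1, k + 1, h => by
      rw [qb_succ_succ, qb_eq_zero_of_lt (by omega), qb_eq_zero_of_lt (by omega)]; ring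

lemma qb_self : ∀ n : ℕ, qb n n = 1
  | 0 => rfl
  | n + 1 => by rw [qb_succ_succ, qb_self n, qb_eq_zero_of_lt n.lt_succ_self]; ring

-- `(1 - q^(m+1)) [n, m+1] = (1 - q^(n-m)) [n, m]`, multiplied by `q^(m+1)` to avoid `n - m`.
lemma qb_absorb_lower (n m : ℕ) :
    X ^ (m + 1) * (1 - X ^ (m + 1)) * qb n (m + 1) = (X ^ (m + 1) - X ^ (n + 1)) * qb n m := by
  induction n generalizing m with
  | zero =>
    rcases m with _ | m
    · simp [qb_zero_right, qb_eq_zero_of_lt]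
    · simp [qb_eq_zero_of_lt]
  | succ n ih =>
    have upper : X ^ (m + 1) * (1 - X ^ (n + 1)) * qb n m
        = (X ^ (m + 1) - X ^ (n + 2)) * qb (n + 1) m := by
      rcases m with _ | m
      · simp only [qb_zero_right]; ring
      · rw [qb_succ_succ]; linear_combination (X : ℚ[X]) * ih m
    rw [qb_succ_succ]
    linear_combination X ^ (m + 1) * ih m + upper

lemma qb_succ_succ' (n m : ℕ) :
    X ^ (m + 1) * qb (n + 1) (m + 1) = X ^ (n + 1) * qb n m + X ^ (m + 1) * qb n (m + 1) := by
  rw [qb_succ_succ]; linear_combination -qb_absorb_lower n m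

lemma qb_symm {n s t : ℕ} (h : s + t = n) : qb n s = qb n t := by
  induction n generalizing s t with
  | zero =>
    obtain ⟨rfl, rfl⟩ : s = 0 ∧ t = 0 := by omega
    rfl
  | succ n ih =>
    rcases s with _ | s
    · rw [← h, zero_add, qb_zero_right, qb_self]
    rcases t with _ | t
    · rw [← h, add_zero, qb_zero_right, qb_self]
    apply mul_left_cancel₀ (pow_ne_zero (s + 1) (X_ne_zero : (X : ℚ[X]) ≠ 0))
    rw [qb_succ_succ', qb_succ_succ, ih (by omega : s + (t + 1) = n),
      ih (by omega : s + 1 + t = n), show n + 1 = s + 1 + (t + 1) by omega]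
    ring

local notation "q" => (RatFunc.X : RatFunc ℚ)

lemma qbinom_natCast (n k : ℕ) : qbinom n k = algebraMap ℚ[X] (RatFunc ℚ) (qb n k) := by
  unfold qbinom
  split_ifs with h
  · simp
  · rw [qb_eq_zero_of_lt (by omega), map_zero]

lemma qbinom_eq_zero_of_lt {n k : ℤ} (h : n < k) : qbinom n k = 0 := if_neg (by omega)

lemma qbinom_eq_zero_of_neg {n k : ℤ} (h : k < 0) : qbinom n k = 0 := if_neg (by omega)

lemma qbinom_succ_left (n k : ℕ) :
    qbinom (n + 1) k = qbinom n (k - 1) + q ^ k * qbinom n k := by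
  rw [← Nat.cast_add_one, qbinom_natCast, qbinom_natCast]
  rcases k with _ | k
  · rw [qbinom_eq_zero_of_neg (by omega), qb_zero_right, qb_zero_right]; simp
  · rw [Nat.cast_add_one, add_sub_cancel_right, qbinom_natCast, qb_succ_succ]
    simp

lemma qbinom_absorb (n k : ℕ) :
    q ^ k * (1 - q ^ k) * qbinom n k = (q ^ k - q ^ (n + 1)) * qbinom n (k - 1) := by
  rcases k with _ | k
  · simp [qbinom_eq_zero_of_neg]
  · rw [Nat.cast_add_one, add_sub_cancel_right, ← Nat.cast_add_one, qbinom_natCast,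
      qbinom_natCast, ← RatFunc.algebraMap_X]
    simp only [← map_pow, ← map_one (algebraMap ℚ[X] (RatFunc ℚ)), ← map_sub, ← map_mul]
    rw [qb_absorb_lower]

lemma qbinom_add_comm (m n : ℕ) : qbinom (m + n) m = qbinom (n + m) n := by
  rw [← Nat.cast_add, ← Nat.cast_add, qbinom_natCast, qbinom_natCast, add_comm n m, qb_symm rfl]

lemma RatFunc.one_sub_X_pow_ne_zero {K : Type*} [Field K] {n : ℕ} (hn : n ≠ 0) :
    (1 : RatFunc K) - RatFunc.X ^ n ≠ 0 := by
  rw [← RatFunc.algebraMap_X, ← map_pow, ← map_one (algebraMap K[X] _), ← map_sub,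
    map_ne_zero_iff _ (IsFractionRing.injective K[X] (RatFunc K)), ← neg_sub, neg_ne_zero,
    ← C_1]
  exact X_pow_sub_C_ne_zero (Nat.pos_of_ne_zero hn) 1

theorem qbinom_wz_pair (a b c k : ℕ) :
    (1 - q ^ (2 * k)) * q ^ k * qbinom (a + b) (a + k) *
        (qbinom (b + c + 1) (b + k) * qbinom (c + a + 1) (c + k + 1) -
          qbinom (b + c) (b + k) * qbinom (c + a) (c + k)) =
      q ^ (c + 1) * (1 - q ^ (a + k)) * qbinom (a + b) (a + k) * qbinom (b + c) (b + k - 1) *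
          qbinom (c + a) (c + k) -
        q ^ (4 * k + c + 1) * (1 - q ^ (a + k + 1)) * qbinom (a + b) (a + k + 1) *
          qbinom (b + c) (b + k) * qbinom (c + a) (c + k + 1) := by
  have pascalQ := qbinom_succ_left (b + c) (b + k)
  have pascalR := qbinom_succ_left (c + a) (c + k + 1)
  have hP := qbinom_absorb (a + b) (a + k + 1)
  have hQ := qbinom_absorb (b + c) (b + k)
  have hR := qbinom_absorb (c + a) (c + k + 1)
  push_cast at pascalQ pascalR hP hQ hR
  simp only [add_sub_cancel_right] at pascalR hP hR
  rw [pascalQ, pascalR]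
  apply mul_left_cancel₀ (a := q ^ (a + b) * (1 - q ^ (c + k + 1)))
    (mul_ne_zero (pow_ne_zero _ RatFunc.X_ne_zero) (RatFunc.one_sub_X_pow_ne_zero (by omega)))
  linear_combination
    q ^ (3 * k + b + c) * (1 - q ^ (c + k + 1)) *
        qbinom (b + c) (b + k) * qbinom (c + a) (c + k + 1) * hP
    + q ^ a * qbinom (a + b) (a + k) * qbinom (c + a) (c + k) *
        (q ^ (c + k + 1) - q ^ (a + c + 2 * k + 1) - 1 + q ^ (2 * k)) * hQ
    + q ^ (a + b + k) * qbinom (a + b) (a + k) *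
        ((1 - q ^ (2 * k)) * qbinom (b + c) (b + k - 1) +
          q ^ (2 * k) * (1 - q ^ (b + k)) * qbinom (b + c) (b + k)) * hR

noncomputable def wzTerm (a b c k : ℕ) : RatFunc ℚ :=
  (1 - q ^ (2 * k)) * q ^ (2 * (k : ℤ) ^ 2 - k - 1) / (1 - q ^ a) *
    qbinom (a + b) (a + k) * qbinom (b + c) (b + k) * qbinom (c + a) (c + k)

noncomputable def wzCert (a b c k : ℕ) : RatFunc ℚ :=
  q ^ (2 * (k : ℤ) ^ 2 - 2 * k + c) * (1 - q ^ (a + k)) / (1 - q ^ a) *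
    qbinom (a + b) (a + k) * qbinom (b + c) (b + k - 1) * qbinom (c + a) (c + k)

lemma wzTerm_succ_sub (a b c k : ℕ) :
    wzTerm a b (c + 1) k - wzTerm a b c k = wzCert a b c k - wzCert a b c (k + 1) := by
  have hq (e : ℤ) (n : ℕ) : q ^ (e + n) = q ^ e * q ^ n := by
    rw [zpow_add₀ RatFunc.X_ne_zero, zpow_natCast]
  obtain ⟨e, he⟩ : ∃ e : ℤ, e = 2 * k ^ 2 - 2 * k - 1 := ⟨_, rfl⟩
  unfold wzTerm wzCert
  rw [show 2 * (k : ℤ) ^ 2 - k - 1 = e + (k : ℕ) by rw [he]; ring,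
    show 2 * (k : ℤ) ^ 2 - 2 * k + c = e + (c + 1 : ℕ) by rw [he]; push_cast; ring,
    show 2 * ((k + 1 : ℕ) : ℤ) ^ 2 - 2 * (k + 1 : ℕ) + c = e + (4 * k + c + 1 : ℕ) by
      rw [he]; push_cast; ring,
    hq, hq, hq]
  push_cast
  simp only [← add_assoc, add_sub_cancel_right]
  rw [add_right_comm (c : ℤ) 1 a, add_right_comm (c : ℤ) 1 k]
  linear_combination q ^ e / (1 - q ^ a) * qbinom_wz_pair a b c k

lemma wzTerm_zero (a b k : ℕ) : wzTerm a b 0 k = 0 := by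
  rcases k with _ | k
  · simp [wzTerm]
  · rw [wzTerm, qbinom_eq_zero_of_lt (show (b : ℤ) + (0 : ℕ) < b + (k + 1 : ℕ) by omega)]
    simp

lemma wzCert_zero (a b c : ℕ) (ha : a ≠ 0) :
    wzCert a b c 0 = qbinom (a + b) a * (q ^ c * qbinom (a + c) a * qbinom (b + c) (b - 1)) := by
  simp only [wzCert, Nat.cast_zero, add_zero]
  rw [show 2 * (0 : ℤ) ^ 2 - 2 * 0 + c = (c : ℕ) by ring, zpow_natCast, qbinom_add_comm c a,
    mul_div_cancel_right₀ _ (RatFunc.one_sub_X_pow_ne_zero ha)]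
  ring

lemma wzCert_succ_self (a b c : ℕ) : wzCert a b c (a + 1) = 0 := by
  rw [wzCert, qbinom_eq_zero_of_lt (show (c : ℤ) + a < c + (a + 1 : ℕ) by omega), mul_zero]

theorem stmt_17 (a b c : ℕ) (ha : 1 ≤ a) :
    ∑ k ∈ range (a + 1),
        (1 - RatFunc.X ^ (2 * k)) * RatFunc.X ^ (2 * (k : ℤ) ^ 2 - k - 1) /
            (1 - RatFunc.X ^ a) *
          qbinom ((a : ℤ) + b) ((a : ℤ) + k) * qbinom ((b : ℤ) + c) ((b : ℤ) + k) *
          qbinom ((c : ℤ) + a) ((c : ℤ) + k) =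
      qbinom ((a : ℤ) + b) a *
        ∑ j ∈ range c,
          (RatFunc.X : RatFunc ℚ) ^ j * qbinom ((a : ℤ) + j) a *
            qbinom ((b : ℤ) + j) ((b : ℤ) - 1) := by
  show ∑ k ∈ range (a + 1), wzTerm a b c k = _
  induction c with
  | zero => simp [wzTerm_zero]
  | succ c ih =>
    calc ∑ k ∈ range (a + 1), wzTerm a b (c + 1) k
        = ∑ k ∈ range (a + 1), wzTerm a b c k
            + ∑ k ∈ range (a + 1), (wzCert a b c k - wzCert a b c (k + 1)) := by
          rw [← sum_add_distrib]
          exact sum_congr rfl fun k _ => by rw [← wzTerm_succ_sub]; ring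
      _ = ∑ k ∈ range (a + 1), wzTerm a b c k + wzCert a b c 0 := by
          rw [sum_range_sub', wzCert_succ_self, sub_zero]
      _ = _ := by rw [ih, wzCert_zero a b c (by omega), sum_range_succ, mul_add]
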